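/- arXiv:1509.07263 — 2 statements merged into one kernel-verified Lean document; each statement's English description precedes it below -/
import Mathlib

section
/- Let n ≥ 2, δ = 1/(10(n+2)), θ = 1/(10(n+2)), and ε > 0. Let V ∈ ℝⁿ be a unit vector and suppose h_x ∈ ℝⁿ satisfies |h_x − εV| ≤ θε. Then (1/|B(0,ε)|) ∫_{B(0,ε)} [(δ−1)((h_x − h)·V)² + (|h_x − h|² − ((h_x − h)·V)²)] dh ≤ −ε²/(n+2). -/
open MeasureTheory Metric
open scoped RealInnerProductSpace

section Aux

lemma aux_integrableOn_ball {n : ℕ} {f : EuclideanSpace ℝ (Fin n) → ℝ} (hf : Continuous f) (ε : ℝ) :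
    IntegrableOn f (ball (0 : EuclideanSpace ℝ (Fin n)) ε) volume :=
  (hf.continuousOn.integrableOn_compact (isCompact_closedBall 0 ε)).mono_set
    ball_subset_closedBall

lemma aux_preimage_ball {n : ℕ} (g : EuclideanSpace ℝ (Fin n) ≃ₗᵢ[ℝ] EuclideanSpace ℝ (Fin n)) (ε : ℝ) :
    g ⁻¹' (ball (0 : EuclideanSpace ℝ (Fin n)) ε) = ball 0 ε := by
  ext x; simp [mem_ball, dist_eq_norm]

lemma aux_integral_isometry {n : ℕ} (g : EuclideanSpace ℝ (Fin n) ≃ₗᵢ[ℝ] EuclideanSpace ℝ (Fin n))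
    (f : EuclideanSpace ℝ (Fin n) → ℝ) (ε : ℝ) :
    ∫ x in ball (0 : EuclideanSpace ℝ (Fin n)) ε, f (g x) = ∫ x in ball (0 : EuclideanSpace ℝ (Fin n)) ε, f x := by
  have h := g.measurePreserving.setIntegral_preimage_emb
    (g.toHomeomorph.measurableEmbedding) f (ball 0 ε)
  rwa [aux_preimage_ball] at h

lemma aux_integral_inner_zero {n : ℕ} (v : EuclideanSpace ℝ (Fin n)) (ε : ℝ) :
    ∫ x in ball (0 : EuclideanSpace ℝ (Fin n)) ε, ⟪x, v⟫ = 0 := by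
  have h := aux_integral_isometry (LinearIsometryEquiv.neg ℝ) (fun x => ⟪x, v⟫) ε
  simp only [LinearIsometryEquiv.coe_neg, inner_neg_left] at h
  rw [integral_neg] at h
  linarith

lemma aux_integral_norm_sq {n : ℕ} (hn : 0 < n) {ε : ℝ} (hε : 0 < ε) :
    ∫ x in ball (0 : EuclideanSpace ℝ (Fin n)) ε, ‖x‖ ^ 2 =
      (volume (ball (0 : EuclideanSpace ℝ (Fin n)) ε)).toReal * ((n : ℝ) * ε ^ 2 / ((n : ℝ) + 2)) := by
  haveI : Nonempty (Fin n) := ⟨⟨0, hn⟩⟩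
  set f : ℝ → ℝ := fun y => if y < ε then y ^ 2 else 0 with hf
  have h1 : ∫ x in ball (0 : EuclideanSpace ℝ (Fin n)) ε, ‖x‖ ^ 2
      = ∫ x : EuclideanSpace ℝ (Fin n), f ‖x‖ := by
    rw [← integral_indicator measurableSet_ball]
    congr 1
    ext x
    simp only [Set.indicator, mem_ball_zero_iff, hf]
  have h2 := integral_fun_norm_addHaar (volume : Measure (EuclideanSpace ℝ (Fin n))) f
  rw [finrank_euclideanSpace_fin] at h2
  have h3 : ∫ y in Set.Ioi (0:ℝ), y ^ (n - 1) • f y = ε ^ (n + 2) / ((n:ℝ) + 2) := by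
    have : ∀ y ∈ Set.Ioi (0:ℝ), y ^ (n-1) • f y = Set.indicator (Set.Iio ε) (fun y => y ^ (n+1)) y := by
      intro y hy
      simp only [Set.indicator, Set.mem_Iio, smul_eq_mul, hf]
      split_ifs with h
      · rw [← pow_add]
        congr 1
        omega
      · ring
    rw [setIntegral_congr_fun measurableSet_Ioi this, setIntegral_indicator measurableSet_Iio]
    have : Set.Ioi (0:ℝ) ∩ Set.Iio ε = Set.Ioo 0 ε := rfl
    rw [this, ← integral_Ioc_eq_integral_Ioo, ← intervalIntegral.integral_of_le hε.le,
      integral_pow]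
    push_cast
    ring
  rw [h1, h2, h3, Measure.addHaar_ball volume 0 hε.le, finrank_euclideanSpace_fin,
    ENNReal.toReal_mul, ENNReal.toReal_ofReal (by positivity)]
  rw [nsmul_eq_mul, smul_eq_mul, measureReal_def]
  rw [show ε ^ (n+2) = ε ^ n * ε ^ 2 by rw [pow_add]]
  ring

lemma aux_integral_coord_sq {n : ℕ} (hn : 0 < n) {ε : ℝ} (hε : 0 < ε) (i : Fin n) :
    ∫ x in ball (0 : EuclideanSpace ℝ (Fin n)) ε, (x i) ^ 2 =
      (volume (ball (0 : EuclideanSpace ℝ (Fin n)) ε)).toReal * (ε ^ 2 / ((n : ℝ) + 2)) := by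
  have hcont : ∀ j : Fin n, Continuous (fun x : EuclideanSpace ℝ (Fin n) => (x j) ^ 2) :=
    fun j => ((continuous_apply j).comp (PiLp.continuous_ofLp 2 _)).pow 2
  have heq : ∀ j : Fin n, ∫ x in ball (0 : EuclideanSpace ℝ (Fin n)) ε, (x j) ^ 2
      = ∫ x in ball (0 : EuclideanSpace ℝ (Fin n)) ε, (x i) ^ 2 := by
    intro j
    have h := aux_integral_isometry (LinearIsometryEquiv.piLpCongrLeft 2 ℝ ℝ (Equiv.swap i j))
      (fun x : EuclideanSpace ℝ (Fin n) => (x i) ^ 2) ε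
    simp only [LinearIsometryEquiv.piLpCongrLeft_apply, Equiv.piCongrLeft'_apply,
      Equiv.symm_swap] at h
    rw [Equiv.swap_apply_left] at h
    exact h
  have hsum : (n : ℝ) * ∫ x in ball (0 : EuclideanSpace ℝ (Fin n)) ε, (x i) ^ 2
      = (volume (ball (0 : EuclideanSpace ℝ (Fin n)) ε)).toReal * ((n : ℝ) * ε ^ 2 / ((n : ℝ) + 2)) := by
    rw [← aux_integral_norm_sq hn hε]
    have : ∀ x : EuclideanSpace ℝ (Fin n), ‖x‖ ^ 2 = ∑ j : Fin n, (x j) ^ 2 := by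
      intro x
      rw [EuclideanSpace.norm_eq, Real.sq_sqrt (by positivity)]
      simp [sq_abs]
    simp_rw [this]
    rw [integral_finset_sum _ (fun j _ => aux_integrableOn_ball (hcont j) ε)]
    simp_rw [heq]
    simp [Finset.sum_const, nsmul_eq_mul]
  have hn' : (n : ℝ) ≠ 0 := Nat.cast_ne_zero.mpr hn.ne'
  apply mul_left_cancel₀ hn'
  rw [hsum]
  ring

lemma aux_integral_inner_sq {n : ℕ} (hn : 0 < n) {ε : ℝ} (hε : 0 < ε) (V : EuclideanSpace ℝ (Fin n))
    (hV : ‖V‖ = 1) :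
    ∫ x in ball (0 : EuclideanSpace ℝ (Fin n)) ε, ⟪x, V⟫ ^ 2 =
      (volume (ball (0 : EuclideanSpace ℝ (Fin n)) ε)).toReal * (ε ^ 2 / ((n : ℝ) + 2)) := by
  classical
  set i0 : Fin n := ⟨0, hn⟩
  have hcard : Module.finrank ℝ (EuclideanSpace ℝ (Fin n)) = Fintype.card (Fin n) := by
    simp [finrank_euclideanSpace_fin]
  have hortho : Orthonormal ℝ (({i0} : Set (Fin n)).restrict (fun _ : Fin n => V)) := by
    rw [orthonormal_iff_ite]
    intro i j
    have hij : i = j := Subsingleton.elim i j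
    subst hij
    rw [if_pos rfl, show ({i0} : Set (Fin n)).restrict (fun _ : Fin n => V) i = V from rfl, real_inner_self_eq_norm_sq, hV]
    norm_num
  obtain ⟨b, hb⟩ := hortho.exists_orthonormalBasis_extension_of_card_eq hcard
  have hbV : b i0 = V := hb i0 rfl
  have hrepr : ∀ x : EuclideanSpace ℝ (Fin n), ⟪x, V⟫ = b.repr x i0 := by
    intro x
    rw [b.repr_apply_apply, hbV, real_inner_comm]
  simp_rw [hrepr]
  have h := aux_integral_isometry (b.repr) (fun y : EuclideanSpace ℝ (Fin n) => (y i0) ^ 2) ε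
  rw [h]
  exact aux_integral_coord_sq hn hε i0

end Aux

lemma aux_final (t N m ε a H : ℝ) (hN4 : 4 ≤ N) (hm : m = N - 2) (htN : 10 * t * N = 1)
    (htpos : 0 < t) (hε : 0 < ε) (ha2 : (1 - t) ^ 2 * ε ^ 2 ≤ a ^ 2)
    (hb2 : H - a ^ 2 ≤ 4 * t ^ 2 * ε ^ 2) :
    (t - 2) * a ^ 2 + H + ((t - 2) * (ε ^ 2 / N) + m * ε ^ 2 / N) ≤ -ε ^ 2 / N := by
  have hNpos : 0 < N := by linarith
  have hdiv : ε ^ 2 / N = 10 * t * ε ^ 2 := by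
    rw [div_eq_iff hNpos.ne']
    nlinarith [htN]
  have ht40 : t ≤ 1 / 40 := by nlinarith [htN]
  rw [show m * ε ^ 2 / N = m * (ε ^ 2 / N) by ring, show -ε ^ 2 / N = -(ε ^ 2 / N) by ring,
    hdiv, hm]
  have h1 : (N - 2) * (10 * t * ε ^ 2) = ε ^ 2 - 20 * t * ε ^ 2 := by nlinarith [htN]
  rw [h1]
  have hprod : 0 ≤ (1 - t) * (a ^ 2 - (1 - t) ^ 2 * ε ^ 2) :=
    mul_nonneg (by linarith) (by linarith)
  have hlast : 0 ≤ ε ^ 2 * (t * (27 - 11 * t - t ^ 2)) := by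
    apply mul_nonneg (sq_nonneg ε)
    apply mul_nonneg htpos.le
    nlinarith
  nlinarith [hb2, hprod, hlast]

set_option maxHeartbeats 1000000 in
theorem stmt5 (n : ℕ) (hn : 2 ≤ n) (δ θ ε : ℝ)
    (hδ : δ = 1 / (10 * ((n : ℝ) + 2))) (hθ : θ = 1 / (10 * ((n : ℝ) + 2))) (hε : 0 < ε)
    (V hx : EuclideanSpace ℝ (Fin n)) (hV : ‖V‖ = 1) (hclose : ‖hx - ε • V‖ ≤ θ * ε) :
    (1 / (volume (ball (0 : EuclideanSpace ℝ (Fin n)) ε)).toReal) *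
      ∫ h in ball (0 : EuclideanSpace ℝ (Fin n)) ε,
        ((δ - 1) * ⟪hx - h, V⟫ ^ 2 + (‖hx - h‖ ^ 2 - ⟪hx - h, V⟫ ^ 2)) ≤
      -ε ^ 2 / ((n : ℝ) + 2) := by
  have hn0 : 0 < n := lt_of_lt_of_le two_pos hn
  set B := ball (0 : EuclideanSpace ℝ (Fin n)) ε with hB
  set vol := (volume B).toReal with hvol
  have hvolpos : 0 < vol := by
    rw [hvol]
    exact ENNReal.toReal_pos (measure_ball_pos volume 0 hε).ne' measure_ball_lt_top.ne
  set a : ℝ := ⟪hx, V⟫ with ha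
  -- pointwise expansion
  have hpt : ∀ h : EuclideanSpace ℝ (Fin n),
      (δ - 1) * ⟪hx - h, V⟫ ^ 2 + (‖hx - h‖ ^ 2 - ⟪hx - h, V⟫ ^ 2)
      = ((δ - 2) * a ^ 2 + ‖hx‖ ^ 2)
        + ((-2 * (δ - 2) * a) * ⟪h, V⟫
        + ((δ - 2) * ⟪h, V⟫ ^ 2
        + ((-2 : ℝ) * ⟪h, hx⟫
        + ‖h‖ ^ 2))) := by
    intro h
    have h1 : ⟪hx - h, V⟫ = a - ⟪h, V⟫ := by rw [inner_sub_left]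
    have h2 : ‖hx - h‖ ^ 2 = ‖hx‖ ^ 2 - 2 * ⟪h, hx⟫ + ‖h‖ ^ 2 := by
      rw [norm_sub_sq_real, real_inner_comm]
    rw [h1, h2]
    ring
  -- integrability
  have hc1 : Continuous (fun h : EuclideanSpace ℝ (Fin n) => ⟪h, V⟫) :=
    continuous_id.inner continuous_const
  have hc2 : Continuous (fun h : EuclideanSpace ℝ (Fin n) => ⟪h, hx⟫) :=
    continuous_id.inner continuous_const
  have hi1 : IntegrableOn (fun h : EuclideanSpace ℝ (Fin n) => (-2 * (δ - 2) * a) * ⟪h, V⟫) B volume :=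
    aux_integrableOn_ball (continuous_const.mul hc1) ε
  have hi2 : IntegrableOn (fun h : EuclideanSpace ℝ (Fin n) => (δ - 2) * ⟪h, V⟫ ^ 2) B volume :=
    aux_integrableOn_ball (continuous_const.mul (hc1.pow 2)) ε
  have hi3 : IntegrableOn (fun h : EuclideanSpace ℝ (Fin n) => (-2 : ℝ) * ⟪h, hx⟫) B volume :=
    aux_integrableOn_ball (continuous_const.mul hc2) ε
  have hi4 : IntegrableOn (fun h : EuclideanSpace ℝ (Fin n) => ‖h‖ ^ 2) B volume :=
    aux_integrableOn_ball (continuous_norm.pow 2) ε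
  have hi34 : IntegrableOn (fun h : EuclideanSpace ℝ (Fin n) =>
      (-2 : ℝ) * ⟪h, hx⟫ + ‖h‖ ^ 2) B volume := hi3.add hi4
  have hi234 : IntegrableOn (fun h : EuclideanSpace ℝ (Fin n) =>
      (δ - 2) * ⟪h, V⟫ ^ 2 + ((-2 : ℝ) * ⟪h, hx⟫ + ‖h‖ ^ 2)) B volume := hi2.add hi34
  have hi1234 : IntegrableOn (fun h : EuclideanSpace ℝ (Fin n) =>
      (-2 * (δ - 2) * a) * ⟪h, V⟫ + ((δ - 2) * ⟪h, V⟫ ^ 2 + ((-2 : ℝ) * ⟪h, hx⟫ + ‖h‖ ^ 2)))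
      B volume := hi1.add hi234
  have hconst : IntegrableOn (fun _ : EuclideanSpace ℝ (Fin n) =>
      (δ - 2) * a ^ 2 + ‖hx‖ ^ 2) B volume :=
    integrableOn_const measure_ball_lt_top.ne
  have hI : (∫ h in B, ((δ - 1) * ⟪hx - h, V⟫ ^ 2 + (‖hx - h‖ ^ 2 - ⟪hx - h, V⟫ ^ 2)))
      = vol * (((δ - 2) * a ^ 2 + ‖hx‖ ^ 2)
          + ((δ - 2) * (ε ^ 2 / ((n : ℝ) + 2)) + (n : ℝ) * ε ^ 2 / ((n : ℝ) + 2))) := by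
    rw [setIntegral_congr_fun measurableSet_ball (fun h _ => hpt h)]
    rw [integral_add hconst hi1234, integral_add hi1 hi234, integral_add hi2 hi34,
      integral_add hi3 hi4]
    rw [setIntegral_const, integral_const_mul, integral_const_mul, integral_const_mul]
    rw [aux_integral_inner_zero V ε, aux_integral_inner_zero hx ε,
      aux_integral_inner_sq hn0 hε V hV, aux_integral_norm_sq hn0 hε]
    simp only [smul_eq_mul, measureReal_def, ← hvol, ← hB]
    ring
  rw [hI, one_div, inv_mul_cancel_left₀ hvolpos.ne']
  -- geometric bounds
  set N : ℝ := (n : ℝ) + 2 with hN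
  have hN4 : (4 : ℝ) ≤ N := by
    have : (2 : ℝ) ≤ (n : ℝ) := by exact_mod_cast hn
    rw [hN]; linarith
  set t : ℝ := 1 / (10 * N) with hts
  have hNpos : 0 < N := by linarith
  have htpos : 0 < t := by rw [hts]; positivity
  have ht40 : t ≤ 1 / 40 := by
    rw [hts, div_le_div_iff₀ (by linarith) (by norm_num)]
    linarith
  have htN : 10 * t * N = 1 := by
    rw [hts]; field_simp
  have hδt : δ = t := by rw [hδ, hts, hN]
  have hθt : θ = t := by rw [hθ, hts, hN]
  set w : EuclideanSpace ℝ (Fin n) := hx - ε • V with hw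
  have hwn : ‖w‖ ≤ t * ε := by rw [hw, ← hθt]; exact hclose
  have hs : a = ε + ⟪w, V⟫ := by
    have hxw : ⟪hx, V⟫ = ⟪w + ε • V, V⟫ := by
      rw [hw]; congr 1; abel
    rw [ha, hxw, inner_add_left, real_inner_smul_left, real_inner_self_eq_norm_sq, hV]
    ring
  have hsabs : |⟪w, V⟫| ≤ t * ε := by
    calc |⟪w, V⟫| ≤ ‖w‖ * ‖V‖ := abs_real_inner_le_norm w V
    _ = ‖w‖ := by rw [hV, mul_one]
    _ ≤ t * ε := hwn
  have hsl : -(t * ε) ≤ ⟪w, V⟫ := neg_le_of_abs_le hsabs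
  have hsu : ⟪w, V⟫ ≤ t * ε := le_of_abs_le hsabs
  have h1t : (0:ℝ) ≤ (1 - t) * ε := mul_nonneg (by linarith) hε.le
  have ha_lb : (1 - t) * ε ≤ a := by rw [hs]; nlinarith
  have ha_pos : 0 ≤ a := le_trans h1t ha_lb
  have ha2 : (1 - t) ^ 2 * ε ^ 2 ≤ a ^ 2 := by
    nlinarith [mul_nonneg (sub_nonneg.2 ha_lb) (add_nonneg ha_pos h1t)]
  have hb2 : ‖hx‖ ^ 2 - a ^ 2 ≤ 4 * t ^ 2 * ε ^ 2 := by
    have hxa : hx - a • V = w - ⟪w, V⟫ • V := by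
      rw [hw, hs, add_smul]; abel
    have h1 : ‖hx - a • V‖ ^ 2 = ‖hx‖ ^ 2 - a ^ 2 := by
      rw [norm_sub_sq_real, real_inner_smul_right, ← ha, norm_smul, Real.norm_eq_abs, hV,
        mul_one, sq_abs]
      ring
    have h2 : ‖hx - a • V‖ ≤ 2 * (t * ε) := by
      rw [hxa]
      calc ‖w - ⟪w, V⟫ • V‖ ≤ ‖w‖ + ‖⟪w, V⟫ • V‖ := norm_sub_le _ _
      _ = ‖w‖ + |⟪w, V⟫| := by rw [norm_smul, Real.norm_eq_abs, hV, mul_one]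
      _ ≤ t * ε + t * ε := add_le_add hwn hsabs
      _ = 2 * (t * ε) := by ring
    have h3 : ‖hx - a • V‖ ^ 2 ≤ (2 * (t * ε)) ^ 2 :=
      pow_le_pow_left₀ (norm_nonneg _) h2 2
    rw [h1] at h3
    have h4 : (2 * (t * ε)) ^ 2 = 4 * t ^ 2 * ε ^ 2 := by ring
    linarith
  rw [hδt]
  exact aux_final t N (n : ℝ) ε a (‖hx‖ ^ 2) hN4 (by rw [hN]; ring) htN htpos hε ha2 hb2
end

section
/- Let n ≥ 2, ε > 0, ν_x, ν_z ∈ ℝⁿ nonzero with |ν_x|, |ν_z| ≤ ε, and let V be a unit vector such that ((ν_x−ν_z)·V)² ≥ (4−θ)ε² with θ = 1/10. Then there exists a rotation (orthogonal map with determinant 1) P : ℝⁿ → ℝⁿ mapping the hyperplane ν_x^⊥ onto ν_z^⊥ such that |h − P(h)|² ≤ θ ε² |h|²/ε² for all h ∈ ν_x^⊥ with |h| ≤ ε; in particular |h − P(h)|² ≤ θε² for all h ∈ ν_x^⊥ ∩ B(0,ε). -/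
open Metric
open scoped RealInnerProductSpace
open Submodule

lemma stmt18_refl_formula (n : ℕ) (s x : EuclideanSpace ℝ (Fin n)) :
    x - reflection (ℝ ∙ s)ᗮ x = (2 * (⟪s, x⟫ / ‖s‖ ^ 2)) • s := by
  rw [reflection_apply, starProjection_orthogonal_val, starProjection_singleton]
  norm_num
  module


lemma stmt18_arith (a b c H D X S : ℝ) (ha : 0 < a) (hb : 0 < b) (hH0 : 0 ≤ H) (hD0 : 0 ≤ D)
    (hc95 : c ≤ -(19 / 20) * (a * b)) (hcs : c ^ 2 ≤ a ^ 2 * b ^ 2)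
    (hSab : a * b * S = 2 * (a * b - c)) (hDS : D * (b ^ 2 * S) = 4 * X ^ 2)
    (hX2' : X ^ 2 * a ^ 2 ≤ (a ^ 2 * b ^ 2 - c ^ 2) * H) : D ≤ H / 10 := by
  have hab : 0 < a * b := mul_pos ha hb
  have habc : 0 < a * b - c := by nlinarith
  have hE : D * ((a * b) * (2 * (a * b - c))) = 4 * X ^ 2 * a ^ 2 := by
    have e1 : D * ((a * b) * (2 * (a * b - c))) = D * (b ^ 2 * S) * a ^ 2 := by
      have h : (a * b) * (2 * (a * b - c)) = (a * b) * (a * b * S) := by rw [hSab]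
      rw [h]; ring
    rw [e1, hDS]
  have hfac : 0 ≤ a * b / 5 - 4 * (a * b + c) := by linarith
  have h3 : 4 * ((a * b - c) * (a * b + c)) * H ≤ ((a * b) * (2 * (a * b - c))) * (H / 10) := by
    nlinarith [mul_nonneg (mul_nonneg habc.le hH0) hfac]
  have hK : 0 < (a * b) * (2 * (a * b - c)) := by positivity
  have h4 : D * ((a * b) * (2 * (a * b - c))) ≤
      (H / 10) * ((a * b) * (2 * (a * b - c))) := by
    rw [hE]
    nlinarith [hX2']
  exact le_of_mul_le_mul_right h4 hK

set_option maxHeartbeats 1000000 in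
theorem stmt18 (n : ℕ) (hn : 2 ≤ n) (ε θ : ℝ) (hε : 0 < ε) (hθ : θ = 1 / 10)
    (νx νz : EuclideanSpace ℝ (Fin n)) (hνx0 : νx ≠ 0) (hνz0 : νz ≠ 0)
    (hνx : ‖νx‖ ≤ ε) (hνz : ‖νz‖ ≤ ε)
    (V : EuclideanSpace ℝ (Fin n)) (hV : ‖V‖ = 1)
    (hopp : (4 - θ) * ε ^ 2 ≤ ⟪νx - νz, V⟫ ^ 2) :
    ∃ P : EuclideanSpace ℝ (Fin n) ≃ₗᵢ[ℝ] EuclideanSpace ℝ (Fin n),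
      LinearMap.det (P.toLinearEquiv : EuclideanSpace ℝ (Fin n) →ₗ[ℝ] EuclideanSpace ℝ (Fin n)) = 1 ∧
      (⇑P '' {h | ⟪h, νx⟫ = 0} = {h | ⟪h, νz⟫ = 0}) ∧
      ∀ h : EuclideanSpace ℝ (Fin n), ⟪h, νx⟫ = 0 → ‖h‖ ≤ ε →
        ‖h - P h‖ ^ 2 ≤ θ * ε ^ 2 * ‖h‖ ^ 2 / ε ^ 2 ∧ ‖h - P h‖ ^ 2 ≤ θ * ε ^ 2 := by
  subst hθ
  set a := ‖νx‖ with ha_def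
  set b := ‖νz‖ with hb_def
  have ha : 0 < a := norm_pos_iff.mpr hνx0
  have hb : 0 < b := norm_pos_iff.mpr hνz0
  set c := ⟪νx, νz⟫ with hc_def
  have hcs : c ^ 2 ≤ a ^ 2 * b ^ 2 := by
    have h2 := real_inner_mul_inner_self_le νx νz
    rw [real_inner_self_eq_norm_sq, real_inner_self_eq_norm_sq] at h2
    nlinarith [h2]
  -- Cauchy–Schwarz applied to the hypothesis
  have hc95' : c ≤ -(19 / 20) * ε ^ 2 := by
    have h2 := real_inner_mul_inner_self_le (νx - νz) V
    rw [real_inner_self_eq_norm_sq, real_inner_self_eq_norm_sq, hV] at h2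
    have h3 : ‖νx - νz‖ ^ 2 = a ^ 2 + b ^ 2 - 2 * c := by
      rw [norm_sub_sq_real]; ring
    nlinarith [hopp, hνx, hνz, ha, hb]
  have hc95 : c ≤ -(19 / 20) * (a * b) := by
    nlinarith [mul_nonneg (sub_nonneg.mpr hνx) (sub_nonneg.mpr hνz), ha.le, hb.le]
  set u : EuclideanSpace ℝ (Fin n) := a⁻¹ • νx with hu_def
  set w : EuclideanSpace ℝ (Fin n) := -(b⁻¹ • νz) with hw_def
  set s : EuclideanSpace ℝ (Fin n) := b⁻¹ • νz - a⁻¹ • νx with hs_def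
  have hu1 : ‖u‖ = 1 := by
    rw [hu_def, norm_smul, Real.norm_eq_abs, abs_of_pos (inv_pos.mpr ha), ← ha_def]
    field_simp
  have hw1 : ‖w‖ = 1 := by
    rw [hw_def, norm_neg, norm_smul, Real.norm_eq_abs, abs_of_pos (inv_pos.mpr hb), ← hb_def]
    field_simp
  have hab : 0 < a * b := mul_pos ha hb
  have hS : ‖s‖ ^ 2 = 2 - 2 * (c / (a * b)) := by
    rw [hs_def, norm_sub_sq_real, norm_smul, norm_smul, real_inner_smul_left,
      real_inner_smul_right, real_inner_comm νx νz, ← hc_def, Real.norm_eq_abs,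
      Real.norm_eq_abs, abs_of_pos (inv_pos.mpr ha), abs_of_pos (inv_pos.mpr hb),
      ← ha_def, ← hb_def]
    field_simp
    ring
  have hS39 : (39 : ℝ) / 10 ≤ ‖s‖ ^ 2 := by
    have : c / (a * b) ≤ -(19 / 20) := by
      rw [div_le_iff₀ hab]; linarith
    rw [hS]; linarith
  have hs0 : s ≠ 0 := by
    intro h
    rw [h, norm_zero] at hS39
    norm_num at hS39
  have hu0 : u ≠ 0 := by
    intro h
    rw [h, norm_zero] at hu1
    norm_num at hu1
  set R₁ := reflection (ℝ ∙ u)ᗮ with hR₁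
  set R₂ := reflection (ℝ ∙ s)ᗮ with hR₂
  set P := R₁.trans R₂ with hP
  have hsuw : -u - w = s := by rw [hu_def, hw_def, hs_def]; module
  have hPu : P u = w := by
    have h1 : R₁ u = -u := reflection_orthogonalComplement_singleton_eq_neg u
    have h2 : R₂ (-u) = w := by
      have hn1 : ‖(-u)‖ = ‖w‖ := by rw [norm_neg, hu1, hw1]
      have := reflection_sub hn1
      rwa [hsuw] at this
    show R₂ (R₁ u) = w
    rw [h1, h2]
  have horthx : ∀ h : EuclideanSpace ℝ (Fin n), ⟪h, νx⟫ = 0 ↔ ⟪h, u⟫ = 0 := by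
    intro h
    rw [hu_def, real_inner_smul_right]
    constructor
    · intro h0; rw [h0]; ring
    · intro h0
      have := mul_eq_zero.mp h0
      rcases this with h1 | h1
      · exact absurd h1 (inv_ne_zero ha.ne')
      · exact h1
  have horthz : ∀ h : EuclideanSpace ℝ (Fin n), ⟪h, νz⟫ = 0 ↔ ⟪h, w⟫ = 0 := by
    intro h
    rw [hw_def, inner_neg_right, real_inner_smul_right, neg_eq_zero]
    constructor
    · intro h0; rw [h0]; ring
    · intro h0
      have := mul_eq_zero.mp h0
      rcases this with h1 | h1
      · exact absurd h1 (inv_ne_zero hb.ne')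
      · exact h1
  have hPh : ∀ h : EuclideanSpace ℝ (Fin n), ⟪h, u⟫ = 0 → P h = R₂ h := by
    intro h hh
    have hmem : h ∈ (ℝ ∙ u)ᗮ := Submodule.mem_orthogonal_singleton_iff_inner_left.mpr hh
    show R₂ (R₁ h) = R₂ h
    rw [reflection_mem_subspace_eq_self hmem]
  refine ⟨P, ?_, ?_, ?_⟩
  · -- determinant
    have hcomp : (P.toLinearEquiv : EuclideanSpace ℝ (Fin n) →ₗ[ℝ] EuclideanSpace ℝ (Fin n)) =
        (R₂.toLinearEquiv : EuclideanSpace ℝ (Fin n) →ₗ[ℝ] EuclideanSpace ℝ (Fin n)) ∘ₗ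
        (R₁.toLinearEquiv : EuclideanSpace ℝ (Fin n) →ₗ[ℝ] EuclideanSpace ℝ (Fin n)) := rfl
    rw [hcomp, LinearMap.det_comp]
    have h1 : LinearMap.det
        (R₁.toLinearEquiv : EuclideanSpace ℝ (Fin n) →ₗ[ℝ] EuclideanSpace ℝ (Fin n)) = -1 := by
      rw [hR₁]
      rw [show ((reflection (ℝ ∙ u)ᗮ).toLinearEquiv :
          EuclideanSpace ℝ (Fin n) →ₗ[ℝ] EuclideanSpace ℝ (Fin n)) =
          (reflection (ℝ ∙ u)ᗮ).toLinearMap from rfl]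
      rw [det_reflection, Submodule.orthogonal_orthogonal, finrank_span_singleton hu0]
      norm_num
    have h2 : LinearMap.det
        (R₂.toLinearEquiv : EuclideanSpace ℝ (Fin n) →ₗ[ℝ] EuclideanSpace ℝ (Fin n)) = -1 := by
      rw [hR₂]
      rw [show ((reflection (ℝ ∙ s)ᗮ).toLinearEquiv :
          EuclideanSpace ℝ (Fin n) →ₗ[ℝ] EuclideanSpace ℝ (Fin n)) =
          (reflection (ℝ ∙ s)ᗮ).toLinearMap from rfl]
      rw [det_reflection, Submodule.orthogonal_orthogonal, finrank_span_singleton hs0]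
      norm_num
    rw [h1, h2]; norm_num
  · -- image of the hyperplane
    ext k
    simp only [Set.mem_image, Set.mem_setOf_eq]
    constructor
    · rintro ⟨h, hh, rfl⟩
      have hhu : ⟪h, u⟫ = 0 := (horthx h).mp hh
      have : ⟪P h, w⟫ = 0 := by
        rw [← hPu, LinearIsometryEquiv.inner_map_map]
        exact hhu
      exact (horthz (P h)).mpr this
    · intro hk
      refine ⟨P.symm k, ?_, P.apply_symm_apply k⟩
      have : ⟪P.symm k, u⟫ = ⟪k, w⟫ := by
        rw [← hPu, ← LinearIsometryEquiv.inner_map_map P (P.symm k) u,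
          P.apply_symm_apply]
      apply (horthx _).mpr
      rw [this]
      exact (horthz k).mp hk
  · -- displacement bound
    intro h hh hhε
    have hhu : ⟪h, u⟫ = 0 := (horthx h).mp hh
    set X := ⟪νz, h⟫ with hX_def
    have hhs : ⟪s, h⟫ = b⁻¹ * X := by
      rw [hs_def, inner_sub_left, real_inner_smul_left, real_inner_smul_left,
        real_inner_comm h νx, hh, ← hX_def]
      ring
    have hdiff : h - P h = (2 * (⟪s, h⟫ / ‖s‖ ^ 2)) • s := by
      rw [hPh h hhu]
      exact stmt18_refl_formula n s h
    set H := ‖h‖ ^ 2 with hH_def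
    have hH0 : 0 ≤ H := sq_nonneg _
    have hD : ‖h - P h‖ ^ 2 = 4 * ⟪s, h⟫ ^ 2 / ‖s‖ ^ 2 := by
      rw [hdiff, norm_smul, mul_pow, Real.norm_eq_abs, sq_abs]
      have hSne : ‖s‖ ^ 2 ≠ 0 := by positivity
      field_simp
      ring
    have hDS : ‖h - P h‖ ^ 2 * (b ^ 2 * ‖s‖ ^ 2) = 4 * X ^ 2 := by
      rw [hD, hhs]
      have hSne : ‖s‖ ^ 2 ≠ 0 := by positivity
      field_simp
    -- Cauchy-Schwarz with the projected vector
    have hXeq : X = ⟪νz - (c / a ^ 2) • νx, h⟫ := by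
      rw [inner_sub_left, real_inner_smul_left, real_inner_comm h νx, hh, ← hX_def]
      ring
    have hN : ‖νz - (c / a ^ 2) • νx‖ ^ 2 = b ^ 2 - c ^ 2 / a ^ 2 := by
      rw [norm_sub_sq_real, real_inner_smul_right, real_inner_comm νx νz, ← hc_def,
        norm_smul, Real.norm_eq_abs, mul_pow, sq_abs, ← ha_def, ← hb_def]
      field_simp
      ring
    have hX2 : X ^ 2 ≤ (b ^ 2 - c ^ 2 / a ^ 2) * H := by
      have hcs2 := real_inner_mul_inner_self_le (νz - (c / a ^ 2) • νx) h
      rw [real_inner_self_eq_norm_sq, real_inner_self_eq_norm_sq, hN] at hcs2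
      rw [hXeq, hH_def, pow_two]
      exact hcs2
    have hX2' : X ^ 2 * a ^ 2 ≤ (a ^ 2 * b ^ 2 - c ^ 2) * H := by
      calc X ^ 2 * a ^ 2 ≤ ((b ^ 2 - c ^ 2 / a ^ 2) * H) * a ^ 2 :=
            mul_le_mul_of_nonneg_right hX2 (sq_nonneg a)
        _ = ((b ^ 2 - c ^ 2 / a ^ 2) * a ^ 2) * H := by ring
        _ = (a ^ 2 * b ^ 2 - c ^ 2) * H := by
              have e : (b ^ 2 - c ^ 2 / a ^ 2) * a ^ 2 = a ^ 2 * b ^ 2 - c ^ 2 := by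
                field_simp
              rw [e]
    have hSab : a * b * ‖s‖ ^ 2 = 2 * (a * b - c) := by
      rw [hS]; field_simp
    set D := ‖h - P h‖ ^ 2 with hD_def
    have hD0 : 0 ≤ D := sq_nonneg _
    have hKey : D ≤ H / 10 :=
      stmt18_arith a b c H D X (‖s‖ ^ 2) ha hb hH0 hD0 hc95 hcs hSab hDS hX2'
    constructor
    · have heq : (1 : ℝ) / 10 * ε ^ 2 * H / ε ^ 2 = H / 10 := by
        field_simp
      rw [heq]
      exact hKey
    · have hHε : H ≤ ε ^ 2 := by
        rw [hH_def]
        exact pow_le_pow_left₀ (norm_nonneg h) hhε 2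
      linarith [hKey, hHε]
end
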